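/- Let p ≥ 1, c₂ > 0 and let c₁ be a constant with c₁ · √c₂ ≥ 4p. Then for every n ≥ 1, P( | n^{−1} Σ_{i=1}^n Σ_{k∈ℤ} ( φ(X_i − k) − E[φ(X_i − k)] ) | > c₁ · √(V_{2,φ}(n)) ) ≤ 2 n^{−p}, where V_{2,φ}(n) = c₂ · log(n) · (2A + 1)² · Φ₀² / n. -/

import Mathlib

/-!
Periodizing `φ` turns the inner series into `g (X i) - 𝔼[g (X i)]` with
`g x = ∑' k, φ (x - k)`. Because `φ` vanishes outside `[-A, A]`, at most `2A + 1` terms of this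
series are nonzero, so `|g| ≤ (2A + 1) Φ₀`, and the two-sided Hoeffding inequality for the `n`
independent centered variables gives the tail bound `2 exp (-c₁² c₂ log n / 2) ≤ 2 n^{-p}`.
-/

open MeasureTheory ProbabilityTheory Real Finset
open scoped NNReal

noncomputable def periodization (φ : ℝ → ℝ) (x : ℝ) : ℝ := ∑' k : ℤ, φ (x - k)

section Periodization

variable {φ : ℝ → ℝ} {A : ℕ}

lemma comp_sub_eq_zero_of_notMem_Icc (hφ : ∀ y, y ∉ Set.Icc (-(A : ℝ)) A → φ y = 0) (x : ℝ)
    {k : ℤ} (hk : k ∉ Icc (⌊x⌋ - A) (⌊x⌋ + A)) : φ (x - k) = 0 := by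
  refine hφ _ fun ⟨hlo, hhi⟩ => hk (mem_Icc.2 ⟨?_, ?_⟩)
  · have : ((⌊x⌋ - A : ℤ) : ℝ) ≤ k := by push_cast; linarith [Int.floor_le x]
    exact_mod_cast this
  · have : (k : ℝ) < ((⌊x⌋ + A + 1 : ℤ) : ℝ) := by push_cast; linarith [Int.lt_floor_add_one x]
    have : k < ⌊x⌋ + A + 1 := by exact_mod_cast this
    omega

lemma hasSum_periodization (hφ : ∀ y, y ∉ Set.Icc (-(A : ℝ)) A → φ y = 0) (x : ℝ) :
    HasSum (fun k : ℤ => φ (x - k)) (periodization φ x) :=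
  (summable_of_ne_finset_zero fun _ => comp_sub_eq_zero_of_notMem_Icc hφ x).hasSum

lemma abs_periodization_le (hφ : ∀ y, y ∉ Set.Icc (-(A : ℝ)) A → φ y = 0) {Φ₀ : ℝ}
    (hφ_bdd : ∀ y, |φ y| ≤ Φ₀) (x : ℝ) : |periodization φ x| ≤ (2 * A + 1) * Φ₀ := by
  rw [periodization, tsum_eq_sum fun _ => comp_sub_eq_zero_of_notMem_Icc hφ x]
  calc |∑ k ∈ Icc (⌊x⌋ - A) (⌊x⌋ + A), φ (x - k)|
      ≤ ∑ k ∈ Icc (⌊x⌋ - A) (⌊x⌋ + A), |φ (x - k)| := abs_sum_le_sum_abs _ _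
    _ ≤ #(Icc (⌊x⌋ - A) (⌊x⌋ + A)) • Φ₀ := sum_le_card_nsmul _ _ _ fun _ _ => hφ_bdd _
    _ = (2 * A + 1) * Φ₀ := by
      rw [Int.card_Icc, nsmul_eq_mul, show ⌊x⌋ + A + 1 - (⌊x⌋ - A) = ((2 * A + 1 : ℕ) : ℤ) by
        push_cast; ring, Int.toNat_natCast]
      push_cast; ring

lemma measurable_periodization (hφ : Measurable φ) : Measurable (periodization φ) :=
  Measurable.tsum fun _ => hφ.comp (measurable_id.sub_const _)

/-- Termwise integration, dominated by the periodization of `|φ|`. -/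
lemma hasSum_integral_comp_sub {α : Type*} [MeasurableSpace α] {μ : Measure α}
    [IsFiniteMeasure μ] (hφ_meas : Measurable φ)
    (hφ : ∀ y, y ∉ Set.Icc (-(A : ℝ)) A → φ y = 0) {Φ₀ : ℝ} (hφ_bdd : ∀ y, |φ y| ≤ Φ₀)
    {X : α → ℝ} (hX : Measurable X) :
    HasSum (fun k : ℤ => ∫ a, φ (X a - k) ∂μ) (∫ a, periodization φ (X a) ∂μ) := by
  have habs : ∀ y, y ∉ Set.Icc (-(A : ℝ)) A → |φ y| = 0 := fun y hy => by rw [hφ y hy, abs_zero]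
  refine hasSum_integral_of_dominated_convergence (fun k a => |φ (X a - k)|)
    (fun k => (hφ_meas.comp (hX.sub_const _)).aestronglyMeasurable)
    (fun k => ae_of_all _ fun a => le_rfl)
    (ae_of_all _ fun a => (hasSum_periodization habs (X a)).summable) ?_
    (ae_of_all _ fun a => hasSum_periodization hφ (X a))
  refine Integrable.of_bound ((measurable_periodization hφ_meas.abs).comp hX).aestronglyMeasurable
    ((2 * A + 1) * Φ₀) (ae_of_all _ fun a => ?_)
  exact abs_periodization_le habs (fun y => (abs_abs (φ y)).trans_le (hφ_bdd y)) (X a)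

lemma tsum_comp_sub_sub_integral {α : Type*} [MeasurableSpace α] {μ : Measure α}
    [IsFiniteMeasure μ] (hφ_meas : Measurable φ)
    (hφ : ∀ y, y ∉ Set.Icc (-(A : ℝ)) A → φ y = 0) {Φ₀ : ℝ} (hφ_bdd : ∀ y, |φ y| ≤ Φ₀)
    {X : α → ℝ} (hX : Measurable X) (a : α) :
    ∑' k : ℤ, (φ (X a - k) - ∫ a', φ (X a' - k) ∂μ)
      = periodization φ (X a) - ∫ a', periodization φ (X a') ∂μ :=
  ((hasSum_periodization hφ (X a)).sub (hasSum_integral_comp_sub hφ_meas hφ hφ_bdd hX)).tsum_eq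

end Periodization

lemma ProbabilityTheory.HasSubgaussianMGF.measureReal_le_abs_le {Ω : Type*} [MeasurableSpace Ω]
    {μ : Measure Ω} {X : Ω → ℝ} {c : ℝ≥0} (h : HasSubgaussianMGF X c μ) {ε : ℝ} (hε : 0 ≤ ε) :
    μ.real {ω | ε ≤ |X ω|} ≤ 2 * exp (-ε ^ 2 / (2 * c)) := by
  have hsplit : {ω | ε ≤ |X ω|} = {ω | ε ≤ X ω} ∪ {ω | ε ≤ (-X) ω} := by
    ext ω; simp [le_abs]
  have hneg := h.neg.measure_ge_le hε
  have hpos := h.measure_ge_le hε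
  rw [hsplit]
  linarith [measureReal_union_le (μ := μ) {ω | ε ≤ X ω} {ω | ε ≤ (-X) ω}]

lemma measureReal_le_abs_sum_sub_integral_le {Ω ι : Type*} [MeasurableSpace Ω] {μ : Measure Ω}
    [IsProbabilityMeasure μ] {Z : ι → Ω → ℝ} (hZ : ∀ i, Measurable (Z i))
    (hindep : iIndepFun Z μ) {B : ℝ} (hB : ∀ i ω, |Z i ω| ≤ B) (s : Finset ι) {ε : ℝ}
    (hε : 0 ≤ ε) :
    μ.real {ω | ε ≤ |∑ i ∈ s, (Z i ω - μ[Z i])|} ≤ 2 * exp (-ε ^ 2 / (2 * (#s * B ^ 2))) := by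
  have hsub (i : ι) : HasSubgaussianMGF (fun ω => Z i ω - μ[Z i]) ((‖B - -B‖₊ / 2) ^ 2) μ :=
    hasSubgaussianMGF_of_mem_Icc (hZ i).aemeasurable (ae_of_all _ fun ω => abs_le.1 (hB i ω))
  have hcentered : iIndepFun (fun i ω => Z i ω - μ[Z i]) μ :=
    (hindep.comp (fun i y => y - μ[Z i]) fun _ => measurable_id.sub_const _ :)
  have hparam : ((∑ _i ∈ s, (‖B - -B‖₊ / 2) ^ 2 : ℝ≥0) : ℝ) = #s * B ^ 2 := by
    push_cast
    rw [sum_const, nsmul_eq_mul, Real.norm_eq_abs, sub_neg_eq_add, ← two_mul,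
      abs_mul, abs_two, mul_div_cancel_left₀ _ two_ne_zero, sq_abs]
  rw [← hparam]
  exact (HasSubgaussianMGF.sum_of_iIndepFun hcentered (s := s) fun i _ => hsub i
    ).measureReal_le_abs_le hε

lemma exp_neg_sq_div_le_rpow_neg {n B c₁ c₂ p : ℝ} (hn : 1 ≤ n) (hB : 0 < B) (hc₂ : 0 < c₂)
    (hp : 1 ≤ p) (hc₁ : 4 * p ≤ c₁ * √c₂) :
    exp (-(n * (c₁ * √(c₂ * log n * B ^ 2 / n))) ^ 2 / (2 * (n * B ^ 2))) ≤ n ^ (-p) := by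
  have hn₀ : 0 < n := by linarith
  have hlog : 0 ≤ log n := log_nonneg hn
  have hc : 2 * p ≤ c₁ ^ 2 * c₂ / 2 := by
    have : (4 * p) ^ 2 ≤ (c₁ * √c₂) ^ 2 := pow_le_pow_left₀ (by linarith) hc₁ 2
    rw [mul_pow c₁, sq_sqrt hc₂.le] at this
    nlinarith
  have hexponent : -(n * (c₁ * √(c₂ * log n * B ^ 2 / n))) ^ 2 / (2 * (n * B ^ 2))
      = -(c₁ ^ 2 * c₂ / 2 * log n) := by
    rw [mul_pow, mul_pow, sq_sqrt (by positivity)]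
    field_simp
  rw [hexponent, rpow_def_of_pos hn₀, exp_le_exp]
  nlinarith

theorem stmt_5_general {Ω : Type*} [MeasurableSpace Ω] (P : Measure Ω) [IsProbabilityMeasure P]
    (A : ℕ) (Φ₀ : ℝ) (hΦ₀ : 0 < Φ₀)
    (φ : ℝ → ℝ) (hφ_meas : Measurable φ)
    (hφ_supp : ∀ y : ℝ, y ∉ Set.Icc (-(A : ℝ)) (A : ℝ) → φ y = 0)
    (hφ_bdd : ∀ y : ℝ, |φ y| ≤ Φ₀)
    (n : ℕ) (hn : 1 ≤ n)
    (X : Fin n → Ω → ℝ) (hX_meas : ∀ i, Measurable (X i))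
    (hX_indep : iIndepFun X P)
    (p c₁ c₂ : ℝ) (hp : 1 ≤ p) (hc₂ : 0 < c₂) (hc₁ : 4 * p ≤ c₁ * Real.sqrt c₂) :
    (P {ω | c₁ * Real.sqrt (c₂ * Real.log n * (2 * (A : ℝ) + 1) ^ 2 * Φ₀ ^ 2 / n) <
        |(n : ℝ)⁻¹ * ∑ i : Fin n,
          ∑' k : ℤ, (φ (X i ω - (k : ℝ)) - ∫ ω', φ (X i ω' - (k : ℝ)) ∂P)|}).toReal ≤
      2 * (n : ℝ) ^ (-p) := by
  have hn₁ : (1 : ℝ) ≤ n := by exact_mod_cast hn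
  have hB : 0 < (2 * (A : ℝ) + 1) * Φ₀ := by positivity
  have hV : c₂ * log n * (2 * (A : ℝ) + 1) ^ 2 * Φ₀ ^ 2 / n
      = c₂ * log n * ((2 * A + 1) * Φ₀) ^ 2 / n := by ring
  have hc₁_nonneg : 0 ≤ c₁ := nonneg_of_mul_nonneg_left (by linarith) (sqrt_pos.2 hc₂)
  set ε := c₁ * √(c₂ * log n * ((2 * A + 1) * Φ₀) ^ 2 / n)
  set Z : Fin n → Ω → ℝ := fun i ω => periodization φ (X i ω)
  have hZ_bdd (i : Fin n) (ω : Ω) : |Z i ω| ≤ (2 * A + 1) * Φ₀ :=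
    abs_periodization_le hφ_supp hφ_bdd _
  have hZ_indep : iIndepFun Z P :=
    hX_indep.comp (fun _ => periodization φ) fun _ => measurable_periodization hφ_meas
  have hevent : {ω | ε < |(n : ℝ)⁻¹ * ∑ i : Fin n,
      ∑' k : ℤ, (φ (X i ω - (k : ℝ)) - ∫ ω', φ (X i ω' - (k : ℝ)) ∂P)|}
      ⊆ {ω | n * ε ≤ |∑ i, (Z i ω - P[Z i])|} := by
    intro ω hω
    simp only [Set.mem_ofPred_eq, tsum_comp_sub_sub_integral hφ_meas hφ_supp hφ_bdd (hX_meas _),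
      abs_mul, abs_inv, Nat.abs_cast] at hω ⊢
    exact ((lt_inv_mul_iff₀ (by positivity)).1 hω).le
  rw [hV, ← measureReal_def]
  calc P.real _ ≤ P.real {ω | n * ε ≤ |∑ i, (Z i ω - P[Z i])|} := measureReal_mono hevent
    _ ≤ 2 * exp (-(n * ε) ^ 2 / (2 * (n * ((2 * A + 1) * Φ₀) ^ 2))) := by
      simpa using measureReal_le_abs_sum_sub_integral_le (fun i => (measurable_periodization
        hφ_meas).comp (hX_meas i)) hZ_indep hZ_bdd univ (by positivity)
    _ ≤ 2 * (n : ℝ) ^ (-p) := by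
      gcongr
      exact exp_neg_sq_div_le_rpow_neg hn₁ hB hc₂ hp hc₁

/-- Concentration of the empirical scaling-coefficient process.
`φ` is a measurable function vanishing outside `[-A, A]` with `‖φ‖_∞ ≤ Φ₀`, and
`X₁, …, X_n` are i.i.d. with common density `f ∈ L²(ℝ)`.  For `p ≥ 1`, `c₂ > 0` and
`c₁ √c₂ ≥ 4p`, the probability that
`|n⁻¹ ∑_{i=1}^n ∑_{k∈ℤ} (φ(X_i − k) − E[φ(X_i − k)])| > c₁ √(V_{2,φ}(n))`
is at most `2 n^{-p}`, where `V_{2,φ}(n) = c₂ log(n) (2A+1)² Φ₀² / n`. -/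
theorem stmt_5 {Ω : Type*} [MeasurableSpace Ω] (P : Measure Ω) [IsProbabilityMeasure P]
    (A : ℕ) (hA : 0 < A) (Φ₀ : ℝ) (hΦ₀ : 0 < Φ₀)
    (φ : ℝ → ℝ) (hφ_meas : Measurable φ)
    (hφ_supp : ∀ y : ℝ, y ∉ Set.Icc (-(A : ℝ)) (A : ℝ) → φ y = 0)
    (hφ_bdd : ∀ y : ℝ, |φ y| ≤ Φ₀)
    (n : ℕ) (hn : 1 ≤ n)
    (X : Fin n → Ω → ℝ) (hX_meas : ∀ i, Measurable (X i))
    (hX_indep : iIndepFun X P)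
    (f : ℝ → ℝ) (hf_meas : Measurable f) (hf_L2 : MemLp f 2 volume)
    (hX_law : ∀ i, P.map (X i) = volume.withDensity fun x => ENNReal.ofReal (f x))
    (p c₁ c₂ : ℝ) (hp : 1 ≤ p) (hc₂ : 0 < c₂) (hc₁ : 4 * p ≤ c₁ * Real.sqrt c₂) :
    (P {ω | c₁ * Real.sqrt (c₂ * Real.log n * (2 * (A : ℝ) + 1) ^ 2 * Φ₀ ^ 2 / n) <
        |(n : ℝ)⁻¹ * ∑ i : Fin n,
          ∑' k : ℤ, (φ (X i ω - (k : ℝ)) - ∫ ω', φ (X i ω' - (k : ℝ)) ∂P)|}).toReal ≤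
      2 * (n : ℝ) ^ (-p) :=
  stmt_5_general P A Φ₀ hΦ₀ φ hφ_meas hφ_supp hφ_bdd n hn X hX_meas hX_indep p c₁ c₂ hp hc₂ hc₁
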